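/- There is a universal constant C such that the following holds. Let n be a natural number, let F be a nonempty finite family of functions from {0,1}^n to [-1,1], let T be a nonempty finite set of functions from {0,1}^n to [0,1], and let δ, ε ∈ (0,1) satisfy C·(1 + log(|F|·|T|))/(ε^2·δ^2) ≤ 2^n. Define the compatibility property T_{F,δ} to be the set of Boolean functions g : {0,1}^n → {0,1} such that for some h ∈ T, |E_{x uniform}[f(x)·(g(x) − h(x))]| ≤ δ for every f ∈ F. Then there exist a natural number m ≤ C·(1 + log(|F|·|T|))/(ε^2·δ^2) and a (possibly randomized) tester T' : ({0,1}^n × {0,1})^m × {0,1}^ℓ → {0,1} for some ℓ, such that on m i.i.d. uniform samples x_i with labels g(x_i) and a uniform seed: if g ∈ T_{F,δ} then T' outputs 1 with probability at least 2/3, and if g is not within distance ε of any member of T_{F,δ} then T' outputs 0 with probability at least 2/3. -/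

import Mathlib

/-! The tester draws `m ≍ (1 + log (|F| |T|)) / (ε δ)²` labelled samples and accepts iff, for some
template `h`, every empirical advantage `(1/m) ∑ᵢ f(xᵢ) (g(xᵢ) - h(xᵢ))` is at most `δ + εδ/16`.
By Hoeffding's inequality and a union bound over `F × T`, with probability `≥ 2/3` all empirical
advantages are within `εδ/16` of the true ones; this gives completeness at once. For soundness,
an accepted `g` has advantages at most `δ + εδ/8` against some template `h`, and such a `g` is
`ε`-close to `T_{F,δ}`: set each bit to `1` independently with probability
`(1 - ε/4) g(x) + (ε/4) h(x)`. By Markov the result is `ε`-close to `g` with probability `3/4`,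
and by Hoeffding over the `2^n` points (this is where `2^n` must be large) it moves every
advantage by at most `εδ/8`, which the factor `1 - ε/4` in front of the old advantage absorbs. -/

/-- Probability that the randomized tester `T` outputs `1` (Accept) on `m` i.i.d.
uniform samples from `{0,1}^n` labeled by `g`, with a uniform seed in `{0,1}^ℓ`. -/
noncomputable def acceptProb (n m l : ℕ)
    (T : (Fin m → (Fin n → Bool)) → (Fin m → Bool) → (Fin l → Bool) → Bool)
    (g : (Fin n → Bool) → Bool) : ℝ :=
  (∑ x : Fin m → (Fin n → Bool), ∑ r : Fin l → Bool,
      if T x (fun i => g (x i)) r then (1 : ℝ) else 0) / ((2 : ℝ) ^ (n * m) * 2 ^ l)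

/-- Normalized Hamming distance between Boolean functions on `{0,1}^n`. -/
noncomputable def fdist (n : ℕ) (f g : (Fin n → Bool) → Bool) : ℝ :=
  ((Finset.univ.filter fun x => f x ≠ g x).card : ℝ) / 2 ^ n

/-- `closeTo n P ε` is `P_ε`: the Boolean functions within distance `ε` of `P`. -/
def closeTo (n : ℕ) (P : Set ((Fin n → Bool) → Bool)) (ε : ℝ) :
    Set ((Fin n → Bool) → Bool) :=
  {f | ∃ g ∈ P, fdist n f g ≤ ε}

/-- The compatibility property `T_{F,δ}`: Boolean functions `g` that are
`(F, δ)`-indistinguishable (under the uniform distribution) from some template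
`h ∈ Temp`. -/
def compat (n : ℕ) (F Temp : Finset ((Fin n → Bool) → ℝ)) (δ : ℝ) :
    Set ((Fin n → Bool) → Bool) :=
  {g | ∃ h ∈ Temp, ∀ f ∈ F,
    |∑ x : Fin n → Bool, ((1 : ℝ) / 2 ^ n) *
      (f x * ((if g x then (1 : ℝ) else 0) - h x))| ≤ δ}

open Finset Real

section FiniteProbability

variable {Ω : Type*} [Fintype Ω] {p : Ω → ℝ}

theorem sum_filter_or_le (hp : ∀ x, 0 ≤ p x) (E E' : Ω → Prop) [DecidablePred E]
    [DecidablePred E'] :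
    ∑ x with E x ∨ E' x, p x ≤ ∑ x with E x, p x + ∑ x with E' x, p x := by
  classical
  rw [filter_or, ← sum_union_inter]
  exact le_add_of_nonneg_right (sum_nonneg fun x _ => hp x)

theorem sum_filter_exists_le {κ : Type*} (hp : ∀ x, 0 ≤ p x) (s : Finset κ)
    (E : κ → Ω → Prop) [∀ k, DecidablePred (E k)] [DecidablePred fun x => ∃ k ∈ s, E k x] :
    ∑ x with ∃ k ∈ s, E k x, p x ≤ ∑ k ∈ s, ∑ x with E k x, p x := by
  simp only [sum_filter]
  rw [sum_comm]
  refine sum_le_sum fun x _ => ?_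
  have hterm : ∀ k, 0 ≤ if E k x then p x else 0 := fun k => by split_ifs <;> simp [hp x]
  split_ifs with h
  · obtain ⟨k, hk, hE⟩ := h
    calc p x = if E k x then p x else 0 := (if_pos hE).symm
      _ ≤ ∑ k ∈ s, if E k x then p x else 0 :=
        single_le_sum (f := fun k => if E k x then p x else 0) (fun k _ => hterm k) hk
  · exact sum_nonneg fun k _ => hterm k

theorem sum_filter_le_le_sum_mul_div (hp : ∀ x, 0 ≤ p x) {D : Ω → ℝ} (hD : ∀ x, 0 ≤ D x) {ε : ℝ}
    (hε : 0 < ε) : ∑ x with ε ≤ D x, p x ≤ (∑ x, p x * D x) / ε := by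
  rw [le_div_iff₀ hε, sum_mul]
  calc ∑ x with ε ≤ D x, p x * ε ≤ ∑ x with ε ≤ D x, p x * D x :=
        sum_le_sum fun x hx => mul_le_mul_of_nonneg_left (mem_filter.1 hx).2 (hp x)
    _ ≤ ∑ x, p x * D x :=
        sum_le_sum_of_subset_of_nonneg (filter_subset _ _) fun x _ _ => mul_nonneg (hp x) (hD x)

theorem exists_not_of_sum_filter_lt (hp : ∑ x, p x = 1) {E : Ω → Prop} [DecidablePred E]
    (h : ∑ x with E x, p x < 1) : ∃ x, ¬ E x := by
  by_contra! hE
  rw [filter_true_of_mem fun x _ => hE x, hp] at h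
  exact lt_irrefl _ h

theorem sum_filter_not_eq_one_sub (hp : ∑ x, p x = 1) (E : Ω → Prop) [DecidablePred E] :
    ∑ x with ¬ E x, p x = 1 - ∑ x with E x, p x := by
  rw [← hp, ← sum_filter_add_sum_filter_not univ E]
  ring

theorem sum_filter_le_sum_filter_of_imp (hp : ∀ x, 0 ≤ p x) {E E' : Ω → Prop}
    [DecidablePred E] [DecidablePred E'] (h : ∀ x, E x → E' x) :
    ∑ x with E x, p x ≤ ∑ x with E' x, p x :=
  sum_le_sum_of_subset_of_nonneg (monotone_filter_right _ fun x _ => h x) fun x _ _ => hp x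

end FiniteProbability

theorem Real.exp_le_one_add_add_sq {u : ℝ} (hu : |u| ≤ 1) : exp u ≤ 1 + u + u ^ 2 := by
  linarith [le_abs_self (exp u - 1 - u), abs_exp_sub_one_sub_id_le hu]

section ProductDistribution

variable {ι α : Type*} [Fintype ι] [DecidableEq ι] [Fintype α] {w : ι → α → ℝ}

theorem sum_pi_prod_mul (w c : ι → α → ℝ) :
    ∑ x : ι → α, ∏ i, w i (x i) * c i (x i) = ∏ i, ∑ a, w i a * c i a :=
  (Fintype.prod_sum fun i a => w i a * c i a).symm

theorem sum_pi_prod_eq_one (hw1 : ∀ i, ∑ a, w i a = 1) : ∑ x : ι → α, ∏ i, w i (x i) = 1 := by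
  simpa [hw1] using sum_pi_prod_mul w fun _ _ => 1

theorem sum_pi_prod_mul_apply (hw1 : ∀ i, ∑ a, w i a = 1) (j : ι) (Y : α → ℝ) :
    ∑ x : ι → α, (∏ i, w i (x i)) * Y (x j) = ∑ a, w j a * Y a := by
  have hc : ∀ x : ι → α, (∏ i, w i (x i)) * Y (x j)
      = ∏ i, w i (x i) * (if i = j then Y (x i) else 1) := fun x => by
    rw [prod_mul_distrib, prod_ite_eq' univ j, if_pos (mem_univ j)]
  simp_rw [hc, sum_pi_prod_mul w fun i a => if i = j then Y a else 1]
  rw [prod_eq_single j (fun i _ hij => by simp [hij, hw1]) (by simp)]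
  simp

theorem sum_mul_exp_le_exp_sq {p X : α → ℝ} (hp0 : ∀ a, 0 ≤ p a) (hp1 : ∑ a, p a = 1)
    (hX : ∀ a, |X a| ≤ 1) (hmean : ∑ a, p a * X a = 0) {t : ℝ} (ht : |t| ≤ 1) :
    ∑ a, p a * exp (t * X a) ≤ exp (t ^ 2) := by
  have hpoint : ∀ a, p a * exp (t * X a) ≤ p a + t * (p a * X a) + t ^ 2 * p a := fun a => by
    have htX : |t * X a| ≤ 1 := by
      rw [abs_mul]; exact mul_le_one₀ ht (abs_nonneg _) (hX a)
    have hsq : (t * X a) ^ 2 ≤ t ^ 2 := by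
      rw [mul_pow]
      exact mul_le_of_le_one_right (sq_nonneg t) ((sq_le_one_iff_abs_le_one _).2 (hX a))
    nlinarith [mul_le_mul_of_nonneg_left (exp_le_one_add_add_sq htX) (hp0 a), hp0 a]
  calc ∑ a, p a * exp (t * X a) ≤ ∑ a, (p a + t * (p a * X a) + t ^ 2 * p a) :=
        sum_le_sum fun a _ => hpoint a
    _ = t ^ 2 + 1 := by
        rw [sum_add_distrib, sum_add_distrib, ← mul_sum, ← mul_sum, hp1, hmean]; ring
    _ ≤ exp (t ^ 2) := add_one_le_exp _

theorem hoeffding (hw0 : ∀ i a, 0 ≤ w i a) (hw1 : ∀ i, ∑ a, w i a = 1) {X : ι → α → ℝ}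
    (hX : ∀ i a, |X i a| ≤ 1) (hmean : ∀ i, ∑ a, w i a * X i a = 0) {s : ℝ} (hs0 : 0 ≤ s)
    (hs : s ≤ 2 * Fintype.card ι) :
    ∑ x : ι → α with s ≤ ∑ i, X i (x i), ∏ i, w i (x i)
      ≤ exp (-s ^ 2 / (4 * Fintype.card ι)) := by
  set N : ℝ := (Fintype.card ι : ℝ)
  set t := s / (2 * N)
  have ht0 : 0 ≤ t := by positivity
  have ht1 : |t| ≤ 1 := by
    rw [abs_of_nonneg ht0]; exact div_le_one_of_le₀ hs (by positivity)
  have hweight : ∀ x : ι → α, 0 ≤ ∏ i, w i (x i) := fun x => prod_nonneg fun i _ => hw0 i (x i)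
  -- Chernoff: bound the indicator of `s ≤ ∑ X` by `exp (t (∑ X - s))`; `t = s / 2N` minimises
  -- the resulting exponent `N t² - t s`.
  calc ∑ x : ι → α with s ≤ ∑ i, X i (x i), ∏ i, w i (x i)
      ≤ ∑ x : ι → α with s ≤ ∑ i, X i (x i),
          exp (-(t * s)) * ∏ i, w i (x i) * exp (t * X i (x i)) := by
        refine sum_le_sum fun x hx => ?_
        rw [prod_mul_distrib, ← exp_sum, ← mul_sum, mul_left_comm, ← exp_add]
        refine le_mul_of_one_le_right (hweight x) (one_le_exp ?_)
        nlinarith [(mem_filter.1 hx).2]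
    _ ≤ ∑ x : ι → α, exp (-(t * s)) * ∏ i, w i (x i) * exp (t * X i (x i)) :=
        sum_le_sum_of_subset_of_nonneg (filter_subset _ _) fun x _ _ =>
          mul_nonneg (exp_nonneg _) (prod_nonneg fun i _ => mul_nonneg (hw0 i _) (exp_nonneg _))
    _ = exp (-(t * s)) * ∏ i, ∑ a, w i a * exp (t * X i a) := by
        rw [← mul_sum, sum_pi_prod_mul w fun i a => exp (t * X i a)]
    _ ≤ exp (-(t * s)) * ∏ _i : ι, exp (t ^ 2) := by
        refine mul_le_mul_of_nonneg_left (prod_le_prod (fun i _ => ?_) fun i _ => ?_)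
          (exp_nonneg _)
        · exact sum_nonneg fun a _ => mul_nonneg (hw0 i a) (exp_nonneg _)
        · exact sum_mul_exp_le_exp_sq (hw0 i) (hw1 i) (hX i) (hmean i) ht1
    _ = exp (-s ^ 2 / (4 * N)) := by
        rw [prod_const, card_univ, ← exp_nat_mul, ← exp_add]
        congr 1
        rcases eq_or_ne N 0 with hN | hN
        · simp [t, hN]
        · simp only [t]; field_simp; ring

theorem hoeffding_abs (hw0 : ∀ i a, 0 ≤ w i a) (hw1 : ∀ i, ∑ a, w i a = 1) {X : ι → α → ℝ}
    (hX : ∀ i a, |X i a| ≤ 1) (hmean : ∀ i, ∑ a, w i a * X i a = 0) {s : ℝ} (hs0 : 0 ≤ s)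
    (hs : s ≤ 2 * Fintype.card ι) :
    ∑ x : ι → α with s ≤ |∑ i, X i (x i)|, ∏ i, w i (x i)
      ≤ 2 * exp (-s ^ 2 / (4 * Fintype.card ι)) := by
  have hneg := hoeffding (X := fun i a => -X i a) hw0 hw1 (fun i a => by simpa using hX i a)
    (fun i => by simp [hmean i]) hs0 hs
  simp only [sum_neg_distrib] at hneg
  simp_rw [le_abs]
  linarith [sum_filter_or_le (p := fun x : ι → α => ∏ i, w i (x i))
    (fun x => prod_nonneg fun i _ => hw0 i _) (fun x => s ≤ ∑ i, X i (x i))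
    (fun x => s ≤ -∑ i, X i (x i)), hoeffding hw0 hw1 hX hmean hs0 hs]

end ProductDistribution

theorem abs_sum_mul_le_one {α : Type*} [Fintype α] {p Y : α → ℝ} (hp0 : ∀ a, 0 ≤ p a)
    (hp1 : ∑ a, p a = 1) (hY : ∀ a, |Y a| ≤ 1) : |∑ a, p a * Y a| ≤ 1 := by
  calc |∑ a, p a * Y a| ≤ ∑ a, p a * |Y a| := by
        refine (abs_sum_le_sum_abs _ _).trans_eq ?_
        simp_rw [abs_mul, abs_of_nonneg (hp0 _)]
    _ ≤ ∑ a, p a := sum_le_sum fun a _ => mul_le_of_le_one_right (hp0 a) (hY a)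
    _ = 1 := hp1

theorem sum_filter_le_abs_sum_sub_le {α : Type*} [Fintype α] {p Y : α → ℝ}
    (hp0 : ∀ a, 0 ≤ p a) (hp1 : ∑ a, p a = 1) (hY : ∀ a, |Y a| ≤ 1) (m : ℕ) {τ : ℝ}
    (hτ0 : 0 ≤ τ) (hτ : τ ≤ 4) :
    ∑ x : Fin m → α with τ * m ≤ |∑ i, Y (x i) - m * ∑ a, p a * Y a|, ∏ i, p (x i)
      ≤ 2 * exp (-(τ ^ 2 * m / 16)) := by
  set μ := ∑ a, p a * Y a
  have hμ : |μ| ≤ 1 := abs_sum_mul_le_one hp0 hp1 hY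
  have hX : ∀ (_ : Fin m) a, |(Y a - μ) / 2| ≤ 1 := fun _ a => by
    rw [abs_div, abs_two, div_le_one two_pos]
    exact (abs_sub _ _).trans (by linarith [hY a])
  have hmean : ∀ _ : Fin m, ∑ a, p a * ((Y a - μ) / 2) = 0 := fun _ => by
    simp_rw [mul_div_assoc', mul_sub, ← sum_div, sum_sub_distrib, ← sum_mul, hp1]
    simp [μ]
  have h := hoeffding_abs (fun _ => hp0) (fun _ => hp1) hX hmean (s := τ * m / 2) (by positivity)
    (by simp only [Fintype.card_fin]; nlinarith)
  have hevent : ∀ x : Fin m → α, |∑ i, (Y (x i) - μ) / 2| = |∑ i, Y (x i) - m * μ| / 2 :=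
      fun x => by
    rw [← sum_div, sum_sub_distrib, sum_const, card_univ, Fintype.card_fin, nsmul_eq_mul,
      abs_div, abs_two]
  simp_rw [hevent, Fintype.card_fin, div_le_div_iff_of_pos_right (two_pos (α := ℝ))] at h
  convert h using 3
  rw [neg_div, div_pow, mul_pow]
  rcases eq_or_ne (m : ℝ) 0 with hm | hm
  · simp [hm]
  · field_simp; ring

theorem abs_mul_ite_sub_le_one {u v : ℝ} (hu : u ∈ Set.Icc (-1) 1) (hv : v ∈ Set.Icc 0 1)
    (b : Bool) : |u * ((if b then 1 else 0) - v)| ≤ 1 := by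
  rw [abs_mul]
  refine mul_le_one₀ (abs_le.2 hu) (abs_nonneg _) (abs_le.2 ⟨?_, ?_⟩) <;>
    cases b <;> simp only [Bool.false_eq_true, ↓reduceIte] <;> linarith [hv.1, hv.2]

section Bernoulli

variable {α : Type*} {q : α → ℝ}

def bernoulliWeight (q : α → ℝ) (a : α) (b : Bool) : ℝ := if b then q a else 1 - q a

theorem bernoulliWeight_nonneg (hq : ∀ a, q a ∈ Set.Icc 0 1) (a : α) (b : Bool) :
    0 ≤ bernoulliWeight q a b := by
  cases b <;> simp [bernoulliWeight, (hq a).1, (hq a).2]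

theorem sum_bernoulliWeight (a : α) : ∑ b, bernoulliWeight q a b = 1 := by
  simp [bernoulliWeight]

theorem sum_bernoulliWeight_mul_sub (a : α) (c : ℝ) :
    ∑ b, bernoulliWeight q a b * (c * ((if b then 1 else 0) - q a)) = 0 := by
  simp only [Fintype.sum_bool, bernoulliWeight, Bool.false_eq_true, ↓reduceIte]
  ring

theorem sum_pi_bernoulliWeight_mul_card_ne [Fintype α] [DecidableEq α]
    (hq : ∀ a, q a ∈ Set.Icc 0 1) (g : α → Bool) :
    ∑ ω : α → Bool, (∏ a, bernoulliWeight q a (ω a)) * #{a | g a ≠ ω a}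
      = ∑ a, |(if g a then 1 else 0) - q a| := by
  simp_rw [natCast_card_filter, mul_sum]
  rw [sum_comm]
  refine sum_congr rfl fun a _ => ?_
  rw [sum_pi_prod_mul_apply sum_bernoulliWeight a fun b => if g a ≠ b then (1 : ℝ) else 0]
  have := hq a
  cases g a <;> simp [bernoulliWeight, abs_of_nonneg, abs_of_nonpos, this.1, this.2]

theorem sum_filter_le_abs_sum_bernoulli_le [Fintype α] [DecidableEq α]
    (hq : ∀ a, q a ∈ Set.Icc 0 1) {f : α → ℝ} (hf : ∀ a, f a ∈ Set.Icc (-1) 1) {s : ℝ}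
    (hs0 : 0 ≤ s) (hs : s ≤ 2 * Fintype.card α) :
    ∑ ω : α → Bool with s ≤ |∑ a, f a * ((if ω a then 1 else 0) - q a)|,
        ∏ a, bernoulliWeight q a (ω a)
      ≤ 2 * exp (-s ^ 2 / (4 * Fintype.card α)) :=
  hoeffding_abs (bernoulliWeight_nonneg hq) sum_bernoulliWeight
    (fun a b => abs_mul_ite_sub_le_one (hf a) (hq a) b)
    (fun a => sum_bernoulliWeight_mul_sub a (f a)) hs0 hs

end Bernoulli

section Cube

variable {n : ℕ}

theorem card_cube : (Fintype.card (Fin n → Bool) : ℝ) = 2 ^ n := by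
  simp

theorem sum_cube_one_div_two_pow : ∑ _x : Fin n → Bool, (1 / 2 ^ n : ℝ) = 1 := by
  simp

noncomputable def advantage (f : (Fin n → Bool) → ℝ) (g : (Fin n → Bool) → Bool)
    (h : (Fin n → Bool) → ℝ) : ℝ :=
  ∑ x : Fin n → Bool, ((1 : ℝ) / 2 ^ n) * (f x * ((if g x then (1 : ℝ) else 0) - h x))

theorem mem_compat_iff {F Temp : Finset ((Fin n → Bool) → ℝ)} {δ : ℝ}
    {g : (Fin n → Bool) → Bool} :
    g ∈ compat n F Temp δ ↔ ∃ h ∈ Temp, ∀ f ∈ F, |advantage f g h| ≤ δ :=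
  Iff.rfl

theorem sum_filter_le_fdist_le {q : (Fin n → Bool) → ℝ} (hq : ∀ x, q x ∈ Set.Icc (0 : ℝ) 1)
    (g : (Fin n → Bool) → Bool) {ε : ℝ} (hε : 0 < ε)
    (hgq : ∀ x, |(if g x then 1 else 0) - q x| ≤ ε / 4) :
    ∑ ω with ε ≤ fdist n g ω, ∏ x, bernoulliWeight q x (ω x) ≤ 1 / 4 := by
  have hmean : ∑ ω, (∏ x, bernoulliWeight q x (ω x)) * fdist n g ω ≤ ε / 4 := by
    simp_rw [fdist, mul_div_assoc', ← sum_div, sum_pi_bernoulliWeight_mul_card_ne hq g]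
    rw [div_le_iff₀ (by positivity)]
    calc ∑ x, |(if g x then 1 else 0) - q x| ≤ ∑ _x : Fin n → Bool, ε / 4 :=
          sum_le_sum fun x _ => hgq x
      _ = ε / 4 * 2 ^ n := by rw [sum_const, card_univ, nsmul_eq_mul, card_cube, mul_comm]
  calc _ ≤ (∑ ω, (∏ x, bernoulliWeight q x (ω x)) * fdist n g ω) / ε :=
        sum_filter_le_le_sum_mul_div (fun ω => prod_nonneg fun x _ => bernoulliWeight_nonneg hq x _)
          (fun ω => by unfold fdist; positivity) hε
    _ ≤ (ε / 4) / ε := by gcongr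
    _ = 1 / 4 := by field_simp

theorem exists_fdist_le_abs_advantage_le (F : Finset ((Fin n → Bool) → ℝ))
    (hF : ∀ f ∈ F, ∀ x, f x ∈ Set.Icc (-1 : ℝ) 1) {q : (Fin n → Bool) → ℝ}
    (hq : ∀ x, q x ∈ Set.Icc (0 : ℝ) 1) (g : (Fin n → Bool) → Bool) {ε r : ℝ} (hε : 0 < ε)
    (hgq : ∀ x, |(if g x then 1 else 0) - q x| ≤ ε / 4) (hr0 : 0 ≤ r) (hr : r ≤ 2)
    (hFr : 2 * F.card * exp (-(r ^ 2 * 2 ^ n / 4)) < 3 / 4) :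
    ∃ ω, fdist n g ω ≤ ε ∧ ∀ f ∈ F, |advantage f ω q| ≤ r := by
  have hP0 : ∀ ω : (Fin n → Bool) → Bool, 0 ≤ ∏ x, bernoulliWeight q x (ω x) := fun ω =>
    prod_nonneg fun x _ => bernoulliWeight_nonneg hq x _
  have hdev : ∀ f ∈ F, ∑ ω : (Fin n → Bool) → Bool with
      r * 2 ^ n ≤ |∑ x, f x * ((if ω x then 1 else 0) - q x)|,
      ∏ x, bernoulliWeight q x (ω x) ≤ 2 * exp (-(r ^ 2 * 2 ^ n / 4)) := fun f hf => by
    convert sum_filter_le_abs_sum_bernoulli_le hq (hF f hf) (s := r * 2 ^ n) (by positivity)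
      (by rw [card_cube]; gcongr) using 3
    rw [card_cube]; field_simp
  obtain ⟨ω, hω⟩ := exists_not_of_sum_filter_lt (sum_pi_prod_eq_one sum_bernoulliWeight)
    (E := fun ω : (Fin n → Bool) → Bool => ε ≤ fdist n g ω ∨
      ∃ f ∈ F, r * 2 ^ n ≤ |∑ x, f x * ((if ω x then 1 else 0) - q x)|) <| by
    calc _ ≤ _ := sum_filter_or_le hP0 _ _
      _ ≤ 1 / 4 + ∑ f ∈ F, 2 * exp (-(r ^ 2 * 2 ^ n / 4)) :=
          add_le_add (sum_filter_le_fdist_le hq g hε hgq)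
            ((sum_filter_exists_le hP0 F _).trans (sum_le_sum hdev))
      _ < 1 := by rw [sum_const, nsmul_eq_mul]; linarith
  push Not at hω
  refine ⟨ω, hω.1.le, fun f hf => ?_⟩
  rw [advantage, ← mul_sum, abs_mul, abs_of_pos (by positivity), one_div_mul_eq_div,
    div_le_iff₀ (by positivity)]
  exact (hω.2 f hf).le

theorem advantage_eq_add_mul (f : (Fin n → Bool) → ℝ) (g ω : (Fin n → Bool) → Bool)
    (h : (Fin n → Bool) → ℝ) (c : ℝ) :
    advantage f ω h = advantage f ω (fun x => (1 - c) * (if g x then 1 else 0) + c * h x)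
      + (1 - c) * advantage f g h := by
  simp only [advantage, mul_sum, ← sum_add_distrib]
  exact sum_congr rfl fun x _ => by ring

theorem mem_closeTo_compat {F Temp : Finset ((Fin n → Bool) → ℝ)}
    (hF : ∀ f ∈ F, ∀ x, f x ∈ Set.Icc (-1 : ℝ) 1)
    (hTemp : ∀ h ∈ Temp, ∀ x, h x ∈ Set.Icc (0 : ℝ) 1)
    {δ ε : ℝ} (hδ0 : 0 ≤ δ) (hδ1 : δ ≤ 1) (hε0 : 0 < ε) (hε1 : ε ≤ 1)
    (hn : 2 * F.card * exp (-(ε ^ 2 * δ ^ 2 * 2 ^ n / 256)) < 3 / 4)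
    {g : (Fin n → Bool) → Bool} {h : (Fin n → Bool) → ℝ} (hh : h ∈ Temp)
    (hg : ∀ f ∈ F, |advantage f g h| ≤ δ + ε * δ / 8) :
    g ∈ closeTo n (compat n F Temp δ) ε := by
  set q : (Fin n → Bool) → ℝ := fun x => (1 - ε / 4) * (if g x then 1 else 0) + ε / 4 * h x
  have hq : ∀ x, q x ∈ Set.Icc (0 : ℝ) 1 := fun x => by
    have := hTemp h hh x
    simp only [q, Set.mem_Icc]
    cases g x <;> simp only [Bool.false_eq_true, ↓reduceIte] <;> constructor <;>
      nlinarith [this.1, this.2]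
  have hgq : ∀ x, |(if g x then 1 else 0) - q x| ≤ ε / 4 := fun x => by
    have := hTemp h hh x
    simp only [q, abs_le]
    cases g x <;> simp only [Bool.false_eq_true, ↓reduceIte] <;> constructor <;>
      nlinarith [this.1, this.2]
  obtain ⟨ω, hdist, hadv⟩ := exists_fdist_le_abs_advantage_le F hF hq g hε0 hgq
    (r := ε * δ / 8) (by positivity) (by nlinarith) (by convert hn using 4; ring)
  refine ⟨ω, mem_compat_iff.2 ⟨h, hh, fun f hf => ?_⟩, hdist⟩
  rw [advantage_eq_add_mul f g ω h (ε / 4)]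
  calc |advantage f ω q + (1 - ε / 4) * advantage f g h|
      ≤ ε * δ / 8 + (1 - ε / 4) * (δ + ε * δ / 8) := by
        refine (abs_add_le _ _).trans (add_le_add (hadv f hf) ?_)
        rw [abs_mul, abs_of_nonneg (by linarith)]
        exact mul_le_mul_of_nonneg_left (hg f hf) (by linarith)
    _ ≤ δ := by nlinarith [mul_nonneg (mul_nonneg hε0.le hε0.le) hδ0]

theorem acceptProb_decide {m l : ℕ} (P : (Fin m → (Fin n → Bool)) → (Fin m → Bool) → Prop)
    [∀ x y, Decidable (P x y)] (g : (Fin n → Bool) → Bool) :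
    acceptProb n m l (fun x y _ => decide (P x y)) g
      = ∑ x with P x (fun i => g (x i)), ∏ _i : Fin m, (1 / 2 ^ n : ℝ) := by
  simp only [acceptProb, sum_const, card_univ, Fintype.card_fun, Fintype.card_bool,
    Fintype.card_fin, nsmul_eq_mul, decide_eq_true_eq, prod_const]
  rw [← mul_sum, sum_boole, pow_mul, one_div_pow]
  push_cast
  field_simp

def sampleSum (f : (Fin n → Bool) → ℝ) {m : ℕ} (x : Fin m → (Fin n → Bool))
    (y : Fin m → Bool) (h : (Fin n → Bool) → ℝ) : ℝ :=
  ∑ i, f (x i) * ((if y i then 1 else 0) - h (x i))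

theorem sum_filter_exists_abs_sampleSum_sub_le {F Temp : Finset ((Fin n → Bool) → ℝ)}
    (hF : ∀ f ∈ F, ∀ x, f x ∈ Set.Icc (-1 : ℝ) 1)
    (hTemp : ∀ h ∈ Temp, ∀ x, h x ∈ Set.Icc (0 : ℝ) 1)
    (g : (Fin n → Bool) → Bool) (m : ℕ) {τ : ℝ} (hτ0 : 0 ≤ τ) (hτ : τ ≤ 4) :
    ∑ x : Fin m → (Fin n → Bool) with ∃ h ∈ Temp, ∃ f ∈ F,
        τ * m ≤ |sampleSum f x (fun i => g (x i)) h - m * advantage f g h|,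
      ∏ _i : Fin m, (1 / 2 ^ n : ℝ) ≤ 2 * (F.card * Temp.card) * exp (-(τ ^ 2 * m / 16)) := by
  have hp0 : ∀ x : Fin m → (Fin n → Bool), 0 ≤ ∏ _i : Fin m, (1 / 2 ^ n : ℝ) := fun _ => by
    positivity
  calc _ ≤ ∑ h ∈ Temp, ∑ f ∈ F, ∑ x : Fin m → (Fin n → Bool) with
          τ * m ≤ |sampleSum f x (fun i => g (x i)) h - m * advantage f g h|,
          ∏ _i : Fin m, (1 / 2 ^ n : ℝ) :=
        (sum_filter_exists_le hp0 Temp _).trans <|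
          sum_le_sum fun h _ => sum_filter_exists_le hp0 F _
    _ ≤ ∑ _h ∈ Temp, ∑ _f ∈ F, 2 * exp (-(τ ^ 2 * m / 16)) :=
        sum_le_sum fun h hh => sum_le_sum fun f hf =>
          sum_filter_le_abs_sum_sub_le (fun _ => by positivity) sum_cube_one_div_two_pow
            (fun z => abs_mul_ite_sub_le_one (hF f hf z) (hTemp h hh z) (g z)) m hτ0 hτ
    _ = 2 * (F.card * Temp.card) * exp (-(τ ^ 2 * m / 16)) := by
        simp only [sum_const, nsmul_eq_mul]; ring

noncomputable def compatTester (F Temp : Finset ((Fin n → Bool) → ℝ)) (δ τ : ℝ) (m : ℕ) :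
    (Fin m → (Fin n → Bool)) → (Fin m → Bool) → (Fin 0 → Bool) → Bool :=
  fun x y _ => decide (∃ h ∈ Temp, ∀ f ∈ F, |sampleSum f x y h| ≤ (δ + τ) * m)

theorem acceptProb_compatTester (F Temp : Finset ((Fin n → Bool) → ℝ)) (δ τ : ℝ) (m : ℕ)
    (g : (Fin n → Bool) → Bool) :
    acceptProb n m 0 (compatTester F Temp δ τ m) g
      = ∑ x : Fin m → (Fin n → Bool) with
          ∃ h ∈ Temp, ∀ f ∈ F, |sampleSum f x (fun i => g (x i)) h| ≤ (δ + τ) * m,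
          ∏ _i : Fin m, (1 / 2 ^ n : ℝ) :=
  acceptProb_decide _ g

variable {F Temp : Finset ((Fin n → Bool) → ℝ)} {δ : ℝ} {g : (Fin n → Bool) → Bool}

theorem le_acceptProb_compatTester (hF : ∀ f ∈ F, ∀ x, f x ∈ Set.Icc (-1 : ℝ) 1)
    (hTemp : ∀ h ∈ Temp, ∀ x, h x ∈ Set.Icc (0 : ℝ) 1) {τ : ℝ} (hτ0 : 0 ≤ τ) (hτ : τ ≤ 4)
    (m : ℕ) (hg : g ∈ compat n F Temp δ) :
    1 - 2 * (F.card * Temp.card) * exp (-(τ ^ 2 * m / 16))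
      ≤ acceptProb n m 0 (compatTester F Temp δ τ m) g := by
  obtain ⟨h, hh, hgh⟩ := mem_compat_iff.1 hg
  have hreject : ∀ x : Fin m → (Fin n → Bool),
      ¬ (∃ h ∈ Temp, ∀ f ∈ F, |sampleSum f x (fun i => g (x i)) h| ≤ (δ + τ) * m) →
      ∃ h ∈ Temp, ∃ f ∈ F,
        τ * m ≤ |sampleSum f x (fun i => g (x i)) h - m * advantage f g h| := by
    intro x hx
    push Not at hx
    obtain ⟨f, hf, hfx⟩ := hx h hh
    have hmadv : |m * advantage f g h| ≤ δ * m := by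
      rw [abs_mul, Nat.abs_cast, mul_comm]
      exact mul_le_mul_of_nonneg_right (hgh f hf) m.cast_nonneg
    have := abs_sub_abs_le_abs_sub (sampleSum f x (fun i => g (x i)) h) (m * advantage f g h)
    exact ⟨h, hh, f, hf, by linarith⟩
  have hp0 : ∀ x : Fin m → (Fin n → Bool), 0 ≤ ∏ _i : Fin m, (1 / 2 ^ n : ℝ) := fun _ => by
    positivity
  rw [acceptProb_compatTester]
  linarith [sum_filter_not_eq_one_sub (sum_pi_prod_eq_one fun _ => sum_cube_one_div_two_pow)
      (fun x : Fin m → (Fin n → Bool) =>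
        ∃ h ∈ Temp, ∀ f ∈ F, |sampleSum f x (fun i => g (x i)) h| ≤ (δ + τ) * m),
    sum_filter_le_sum_filter_of_imp hp0 hreject,
    sum_filter_exists_abs_sampleSum_sub_le hF hTemp g m hτ0 hτ]

theorem acceptProb_compatTester_le (hF : ∀ f ∈ F, ∀ x, f x ∈ Set.Icc (-1 : ℝ) 1)
    (hTemp : ∀ h ∈ Temp, ∀ x, h x ∈ Set.Icc (0 : ℝ) 1) {ε : ℝ} (hδ0 : 0 ≤ δ) (hδ1 : δ ≤ 1)
    (hε0 : 0 < ε) (hε1 : ε ≤ 1)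
    (hn : 2 * F.card * exp (-(ε ^ 2 * δ ^ 2 * 2 ^ n / 256)) < 3 / 4) (m : ℕ)
    (hg : g ∉ closeTo n (compat n F Temp δ) ε) :
    acceptProb n m 0 (compatTester F Temp δ (ε * δ / 16) m) g
      ≤ 2 * (F.card * Temp.card) * exp (-((ε * δ / 16) ^ 2 * m / 16)) := by
  have haccept : ∀ x : Fin m → (Fin n → Bool),
      (∃ h ∈ Temp, ∀ f ∈ F, |sampleSum f x (fun i => g (x i)) h| ≤ (δ + ε * δ / 16) * m) →
      ∃ h ∈ Temp, ∃ f ∈ F,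
        ε * δ / 16 * m ≤ |sampleSum f x (fun i => g (x i)) h - m * advantage f g h| := by
    rintro x ⟨h, hh, hx⟩
    obtain ⟨f, hf, hfg⟩ : ∃ f ∈ F, δ + ε * δ / 8 < |advantage f g h| := by
      by_contra! hclose
      exact hg (mem_closeTo_compat hF hTemp hδ0 hδ1 hε0 hε1 hn hh hclose)
    have hmadv : (δ + ε * δ / 8) * m ≤ |m * advantage f g h| := by
      rw [abs_mul, Nat.abs_cast, mul_comm (m : ℝ)]
      exact mul_le_mul_of_nonneg_right hfg.le m.cast_nonneg
    have := abs_sub_abs_le_abs_sub (m * advantage f g h) (sampleSum f x (fun i => g (x i)) h)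
    rw [abs_sub_comm] at this
    exact ⟨h, hh, f, hf, by linarith [hx f hf]⟩
  rw [acceptProb_compatTester]
  exact (sum_filter_le_sum_filter_of_imp (fun _ => by positivity) haccept).trans
    (sum_filter_exists_abs_sampleSum_sub_le hF hTemp g m (by positivity) (by nlinarith))

end Cube

theorem two_mul_mul_exp_neg_le {K a : ℝ} (hK : 1 ≤ K) (ha : 4 * (1 + log K) ≤ a) :
    2 * K * exp (-a) ≤ 1 / 3 := by
  have he3 : 6 ≤ exp 3 := by linarith [quadratic_le_exp_of_nonneg (x := 3) (by norm_num)]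
  have hL : 0 ≤ log K := log_nonneg hK
  calc 2 * K * exp (-a) = 2 * exp (log K - a) := by
        rw [exp_sub, exp_log (by linarith), exp_neg]; ring
    _ ≤ 2 * exp (-3) := by gcongr; linarith
    _ ≤ 1 / 3 := by
        rw [exp_neg, ← div_eq_mul_inv, div_le_div_iff₀ (by positivity) (by norm_num)]
        linarith

theorem le_mul_floor_div {L ε δ : ℝ} (hL : 0 ≤ L) (hε : ε ∈ Set.Ioo (0 : ℝ) 1)
    (hδ : δ ∈ Set.Ioo (0 : ℝ) 1) :
    2 ^ 14 * (1 + L) ≤ ε ^ 2 * δ ^ 2 * ⌊2 ^ 15 * (1 + L) / (ε ^ 2 * δ ^ 2)⌋₊ := by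
  have hεδ : 0 < ε ^ 2 * δ ^ 2 := by have := hε.1; have := hδ.1; positivity
  have hεδ1 : ε ^ 2 * δ ^ 2 ≤ 1 :=
    mul_le_one₀ (pow_le_one₀ hε.1.le hε.2.le) (by positivity) (pow_le_one₀ hδ.1.le hδ.2.le)
  set B := 2 ^ 15 * (1 + L) / (ε ^ 2 * δ ^ 2)
  have hB : ε ^ 2 * δ ^ 2 * B = 2 ^ 15 * (1 + L) := mul_div_cancel₀ _ hεδ.ne'
  have hB2 : 2 ≤ B := by nlinarith
  have hfloor : B / 2 ≤ ⌊B⌋₊ := by linarith [Nat.lt_floor_add_one B]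
  nlinarith [mul_le_mul_of_nonneg_left hfloor hεδ.le]

/-- **Compatibility with regularity templates is testable.** There is a universal
constant `C > 0` such that for every finite family `F` of `[-1,1]`-valued distinguishers
and finite set `Temp` of `[0,1]`-valued templates on `{0,1}^n`, and all
`δ, ε ∈ (0,1)` with `C·(1 + log(|F|·|Temp|))/(ε²·δ²) ≤ 2^n`, the compatibility property
`T_{F,δ}` is testable with proximity `ε` from some `m ≤ C·(1 + log(|F|·|Temp|))/(ε²·δ²)`
samples. -/
theorem stmt_15 : ∃ C : ℝ, 0 < C ∧
    ∀ (n : ℕ) (F Temp : Finset ((Fin n → Bool) → ℝ)),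
      F.Nonempty → (∀ f ∈ F, ∀ x, f x ∈ Set.Icc (-1 : ℝ) 1) →
      Temp.Nonempty → (∀ h ∈ Temp, ∀ x, h x ∈ Set.Icc (0 : ℝ) 1) →
      ∀ δ ε : ℝ, δ ∈ Set.Ioo (0 : ℝ) 1 → ε ∈ Set.Ioo (0 : ℝ) 1 →
      C * (1 + Real.log ((F.card : ℝ) * (Temp.card : ℝ))) / (ε ^ 2 * δ ^ 2) ≤ 2 ^ n →
      ∃ (m l : ℕ)
        (T' : (Fin m → (Fin n → Bool)) → (Fin m → Bool) → (Fin l → Bool) → Bool),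
        (m : ℝ) ≤ C * (1 + Real.log ((F.card : ℝ) * (Temp.card : ℝ))) / (ε ^ 2 * δ ^ 2) ∧
        (∀ g ∈ compat n F Temp δ, 2 / 3 ≤ acceptProb n m l T' g) ∧
        (∀ g, g ∉ closeTo n (compat n F Temp δ) ε → acceptProb n m l T' g ≤ 1 / 3) := by
  refine ⟨2 ^ 15, by norm_num, fun n F Temp hF hFb hT hTb δ ε hδ hε hn => ?_⟩
  have hFK : (F.card : ℝ) ≤ F.card * Temp.card :=
    le_mul_of_one_le_right (Nat.cast_nonneg _) (by exact_mod_cast hT.card_pos)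
  have hK : 1 ≤ (F.card : ℝ) * Temp.card := le_trans (by exact_mod_cast hF.card_pos) hFK
  have hL : 0 ≤ 1 + log ((F.card : ℝ) * Temp.card) := by linarith [log_nonneg hK]
  have hεδ : 0 < ε ^ 2 * δ ^ 2 := by have := hε.1; have := hδ.1; positivity
  have hround : 2 * F.card * exp (-(ε ^ 2 * δ ^ 2 * 2 ^ n / 256)) < 3 / 4 := by
    have h2n := (div_le_iff₀' hεδ).1 hn
    calc 2 * F.card * exp (-(ε ^ 2 * δ ^ 2 * 2 ^ n / 256))
        ≤ 2 * (F.card * Temp.card) * exp (-(ε ^ 2 * δ ^ 2 * 2 ^ n / 256)) := by gcongr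
      _ ≤ 1 / 3 := two_mul_mul_exp_neg_le hK (by linarith)
      _ < 3 / 4 := by norm_num
  have hm := le_mul_floor_div (log_nonneg hK) hε hδ
  set m := ⌊2 ^ 15 * (1 + log ((F.card : ℝ) * Temp.card)) / (ε ^ 2 * δ ^ 2)⌋₊
  have hsample := two_mul_mul_exp_neg_le hK (a := (ε * δ / 16) ^ 2 * m / 16) (by linarith)
  refine ⟨m, 0, compatTester F Temp δ (ε * δ / 16) m,
    Nat.floor_le (div_nonneg (mul_nonneg (by norm_num) hL) hεδ.le), fun g hg => ?_, fun g hg => ?_⟩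
  · linarith [le_acceptProb_compatTester hFb hTb (τ := ε * δ / 16)
      (by nlinarith [hε.1, hδ.1]) (by nlinarith [hε.1, hε.2, hδ.1, hδ.2]) m hg]
  · linarith [acceptProb_compatTester_le hFb hTb hδ.1.le hδ.2.le hε.1 hε.2.le hround m hg]
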